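/- arXiv:1104.5612 — 2 statements merged into one kernel-verified Lean document; each statement's English description precedes it below -/
import Mathlib

section
/- Let g ∈ AC((0,T)) satisfy g(t) = 1/t + o(t) as t → 0⁺ (so that g(s) - 1/s is bounded near 0). Define φ(t) = t·exp(∫₀ᵗ (g(s) - 1/s) ds) for t ∈ (0,T) and φ(0) = 0. Then φ is C¹ on [0,T), φ(0) = 0, φ'(0) = 1, φ > 0 on (0,T), and φ'(t) = g(t)φ(t) for t ∈ (0,T). -/
open Set MeasureTheory Filter Topology intervalIntegral

/-! Writing `h(s) = g(s) - 1/s` and `F(t) = ∫₀ᵗ h`, we have `φ(t) = t·exp(F(t))`. Since `h → 0`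
at `0⁺`, `|F(t)| ≤ t·sup_{(0,t]} |h| → 0`, so the difference quotient `φ(t)/t = exp(F(t))` tends
to `1`. On `(0,T)` the fundamental theorem of calculus gives `F' = h`, hence
`φ' = (1 + t·h(t))·exp(F(t)) = g·φ`, and this formula for `φ'` also tends to `1` at `0⁺`. -/

theorem continuousOn_Ico_of_tendsto_nhdsGT {α β : Type*} [TopologicalSpace α] [LinearOrder α]
    [OrderTopology α] [TopologicalSpace β] {f : α → β} {a b : α}
    (hf : ContinuousOn f (Ioo a b)) (ha : Tendsto f (𝓝[>] a) (𝓝 (f a))) :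
    ContinuousOn f (Ico a b) := by
  rintro x ⟨hax, hxb⟩
  rcases hax.eq_or_lt with rfl | hax
  · exact (continuousWithinAt_Ioi_iff_Ici.1 ha).mono Ico_subset_Ici_self
  · exact (hf.continuousAt (Ioo_mem_nhds hax hxb)).continuousWithinAt

theorem hasDerivWithinAt_mul_of_tendsto_nhdsGT {E : ℝ → ℝ} {c : ℝ}
    (hE : Tendsto E (𝓝[>] 0) (𝓝 c)) : HasDerivWithinAt (fun t => t * E t) c (Ici 0) 0 := by
  rw [hasDerivWithinAt_iff_tendsto_slope, Ici_sdiff_left]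
  refine hE.congr' (eventually_nhdsWithin_of_forall fun t (ht : 0 < t) => ?_)
  simp [slope_def_field, ht.ne']

theorem tendsto_intervalIntegral_nhdsGT_zero {h : ℝ → ℝ} (hh : Tendsto h (𝓝[>] 0) (𝓝 0)) :
    Tendsto (fun t => ∫ s in (0:ℝ)..t, h s) (𝓝[>] 0) (𝓝 0) := by
  rw [Metric.tendsto_nhds] at hh ⊢
  intro ε hε
  obtain ⟨δ, hδ, hsmall⟩ := (nhdsGT_basis_Ioc (0:ℝ)).eventually_iff.1 (hh ε hε)
  filter_upwards [Ioo_mem_nhdsGT (lt_min hδ one_pos)] with t ⟨ht0, ht⟩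
  have hbound : ∀ s ∈ uIoc 0 t, ‖h s‖ ≤ ε := by
    rw [uIoc_of_le ht0.le]
    intro s hs
    simpa using (hsmall ⟨hs.1, hs.2.trans (ht.le.trans (min_le_left _ _))⟩).le
  calc dist (∫ s in (0:ℝ)..t, h s) 0 ≤ ε * |t - 0| := by
        simpa using norm_integral_le_of_norm_le_const hbound
    _ < ε := by
        rw [sub_zero, abs_of_pos ht0]
        exact mul_lt_of_lt_one_right hε (ht.trans_le (min_le_right _ _))

theorem integrating_factor_general
    (g : ℝ → ℝ) (T : ℝ)
    -- g ∈ AC((0,T)) (in particular continuous on (0,T))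
    (hgcont : ContinuousOn g (Ioo 0 T))
    -- asymptotic behaviour: g(t) - 1/t → 0 as t → 0⁺ (in particular bounded near 0)
    (hgasymp : Tendsto (fun t => g t - 1 / t) (𝓝[>] 0) (𝓝 0))
    -- integrability of g(s) - 1/s near 0
    (hgint : ∀ t ∈ Ioo 0 T, IntervalIntegrable (fun s => g s - 1 / s) volume 0 t) :
    ∀ φ : ℝ → ℝ, (∀ t, φ t = t * Real.exp (∫ s in (0:ℝ)..t, (g s - 1 / s))) →
      φ 0 = 0 ∧
      -- φ is C¹ on [0,T) with φ'(0) = 1 and φ' = gφ on (0,T)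
      ∃ φ' : ℝ → ℝ, ContinuousOn φ' (Ico 0 T) ∧ φ' 0 = 1 ∧
        HasDerivWithinAt φ (φ' 0) (Ici 0) 0 ∧
        ∀ t ∈ Ioo 0 T, HasDerivAt φ (φ' t) t ∧ 0 < φ t ∧ φ' t = g t * φ t := by
  intro φ hφ
  obtain rfl : φ = _ := funext hφ
  set h : ℝ → ℝ := fun s => g s - 1 / s
  set F : ℝ → ℝ := fun t => ∫ s in (0:ℝ)..t, h s
  have hh_cont : ContinuousOn h (Ioo 0 T) :=
    hgcont.sub (continuousOn_const.div continuousOn_id fun x hx => hx.1.ne')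
  have hF_deriv (t : ℝ) (ht : t ∈ Ioo 0 T) : HasDerivAt F (h t) t :=
    integral_hasDerivAt_right (hgint t ht) (hh_cont.stronglyMeasurableAtFilter isOpen_Ioo t ht)
      (hh_cont.continuousAt (isOpen_Ioo.mem_nhds ht))
  have hexpF : Tendsto (fun t => Real.exp (F t)) (𝓝[>] 0) (𝓝 1) := by
    have := (Real.continuous_exp.tendsto 0).comp (tendsto_intervalIntegral_nhdsGT_zero hgasymp)
    rwa [Real.exp_zero] at this
  have hth : Tendsto (fun t => t * h t) (𝓝[>] 0) (𝓝 0) := by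
    simpa using (tendsto_nhdsWithin_of_tendsto_nhds tendsto_id).mul hgasymp
  refine ⟨by simp, fun t => (1 + t * h t) * Real.exp (F t), ?_, by simp [F],
    by simpa [F] using hasDerivWithinAt_mul_of_tendsto_nhdsGT hexpF, fun t ht => ⟨?_, ?_, ?_⟩⟩
  · refine continuousOn_Ico_of_tendsto_nhdsGT ?_ (by simpa [F] using (hth.const_add 1).mul hexpF)
    exact (continuousOn_const.add (continuousOn_id.mul hh_cont)).mul
      fun t ht => (hF_deriv t ht).continuousAt.rexp.continuousWithinAt
  · exact ((hasDerivAt_id' t).mul (hF_deriv t ht).exp).congr_deriv (by ring)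
  · exact mul_pos ht.1 (Real.exp_pos _)
  · show (1 + t * (g t - 1 / t)) * Real.exp (F t) = g t * (t * Real.exp (F t))
    field_simp [ht.1.ne']
    ring

/-- Integrating-factor construction: if `g(t) = 1/t + o(1)` as `t → 0⁺` (with
`g(s) - 1/s` integrable near `0`), then `φ(t) = t·exp(∫₀ᵗ (g(s) - 1/s) ds)`
satisfies `φ(0) = 0`, `φ'(0) = 1`, `φ > 0` on `(0,T)`, `φ' = gφ` on `(0,T)`,
and `φ` is `C¹` on `[0,T)` (its derivative extends continuously to `0`). -/
theorem integrating_factor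
    (g : ℝ → ℝ) (T : ℝ) (hT : 0 < T)
    -- g ∈ AC((0,T)) (in particular continuous on (0,T))
    (hgcont : ContinuousOn g (Ioo 0 T))
    -- asymptotic behaviour: g(t) - 1/t → 0 as t → 0⁺ (in particular bounded near 0)
    (hgasymp : Tendsto (fun t => g t - 1 / t) (𝓝[>] 0) (𝓝 0))
    -- integrability of g(s) - 1/s near 0
    (hgint : ∀ t ∈ Ioo 0 T, IntervalIntegrable (fun s => g s - 1 / s) volume 0 t) :
    ∀ φ : ℝ → ℝ, (∀ t, φ t = t * Real.exp (∫ s in (0:ℝ)..t, (g s - 1 / s))) →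
      φ 0 = 0 ∧
      -- φ is C¹ on [0,T) with φ'(0) = 1 and φ' = gφ on (0,T)
      ∃ φ' : ℝ → ℝ, ContinuousOn φ' (Ico 0 T) ∧ φ' 0 = 1 ∧
        HasDerivWithinAt φ (φ' 0) (Ici 0) 0 ∧
        ∀ t ∈ Ioo 0 T, HasDerivAt φ (φ' t) t ∧ 0 < φ t ∧ φ' t = g t * φ t :=
  integrating_factor_general g T hgcont hgasymp hgint
end

section
/- Let A be a symmetric endomorphism of an n-dimensional real inner product space with eigenvalues k₁,…,k_n. Define Hₖ by C(n,k)·Hₖ = (-1)^k·Sₖ where Sₖ is the k-th elementary symmetric polynomial of the kᵢ, and define Newton transformations P₀ = I, Pₖ = C(n,k)Hₖ·I + A∘Pₖ₋₁. Then Tr(Pₖ) = cₖHₖ where cₖ = (n-k)·C(n,k). -/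
open Finset

/-! In an eigenbasis `eᵢ` of `A` every `Pₖ` is diagonal: it acts on `eᵢ` by `(-1)ᵏ Sₖ(i)`, where
`Sₖ(i)` is the `k`-th elementary symmetric function of the eigenvalues other than `kᵢ`. This follows
by induction from `Sₖ₊₁ = Sₖ₊₁(i) + kᵢ Sₖ(i)`. Summing over `i` counts each `k`-subset once for every
one of the `n - k` indices outside it, so `Tr Pₖ = (-1)ᵏ (n - k) Sₖ = (n - k) C(n,k) Hₖ`. -/

section ElementarySymmetric

variable {ι R : Type*} [CommSemiring R] [DecidableEq ι] (f : ι → R)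

theorem Finset.sum_powersetCard_succ_insert_prod {s : Finset ι} {i : ι} (hi : i ∉ s) (k : ℕ) :
    ∑ t ∈ (insert i s).powersetCard (k + 1), ∏ j ∈ t, f j =
      ∑ t ∈ s.powersetCard (k + 1), ∏ j ∈ t, f j + f i * ∑ t ∈ s.powersetCard k, ∏ j ∈ t, f j := by
  simp only [← Finset.esymm_map_val, insert_val_of_notMem hi, Multiset.map_cons, Multiset.esymm,
    Multiset.powersetCard_cons, Multiset.map_add, Multiset.sum_add, Multiset.map_map,
    Function.comp_def, Multiset.prod_cons, Multiset.sum_map_mul_left]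

theorem Finset.sum_sum_powersetCard_erase_prod (s : Finset ι) (k : ℕ) :
    ∑ i ∈ s, ∑ t ∈ (s.erase i).powersetCard k, ∏ j ∈ t, f j =
      (#s - k) • ∑ t ∈ s.powersetCard k, ∏ j ∈ t, f j := by
  have h_erase (i : ι) : (s.erase i).powersetCard k = (s.powersetCard k).filter (i ∉ ·) := by
    ext t
    simp only [mem_filter, mem_powersetCard, subset_erase]
    tauto
  simp_rw [h_erase, sum_filter]
  rw [sum_comm, smul_sum]
  refine sum_congr rfl fun t ht => ?_
  obtain ⟨hts, htk⟩ := mem_powersetCard.1 ht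
  rw [sum_ite, sum_const_zero, add_zero, sum_const, filter_notMem_eq_sdiff,
    card_sdiff_of_subset hts, htk]

end ElementarySymmetric

theorem LinearMap.trace_eq_sum_of_apply_basis_eq_smul {R M ι : Type*} [CommRing R] [AddCommGroup M]
    [Module R M] [Fintype ι] [DecidableEq ι] (b : Module.Basis ι R M) {f : M →ₗ[R] M} {c : ι → R}
    (hf : ∀ i, f (b i) = c i • b i) : LinearMap.trace R M f = ∑ i, c i := by
  have hf_diag : f = Matrix.toLin b b (Matrix.diagonal c) := b.ext fun i => by
    rw [hf, Matrix.toLin_self]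
    simp [Matrix.diagonal_apply, ite_smul]
  rw [hf_diag, Matrix.trace_toLin_eq, Matrix.trace_diagonal]

section Newton

variable {ι R M : Type*} [Fintype ι] [DecidableEq ι] [CommRing R] [AddCommGroup M] [Module R M]
  {ev : ι → R} {A : M →ₗ[R] M} {P : ℕ → M →ₗ[R] M}

theorem newton_apply_of_apply_eq_smul (hP0 : P 0 = LinearMap.id)
    (hPrec : ∀ j, P (j + 1) =
      ((-1) ^ (j + 1) * ∑ t ∈ univ.powersetCard (j + 1), ∏ l ∈ t, ev l) • LinearMap.id + A ∘ₗ P j)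
    {i : ι} {v : M} (hv : A v = ev i • v) (k : ℕ) :
    P k v = ((-1) ^ k * ∑ t ∈ (univ.erase i).powersetCard k, ∏ l ∈ t, ev l) • v := by
  induction k with
  | zero => simp [hP0]
  | succ k ih =>
    rw [hPrec, LinearMap.add_apply, LinearMap.comp_apply, ih, map_smul, hv, smul_smul,
      LinearMap.smul_apply, LinearMap.id_apply, ← add_smul, ← insert_erase (mem_univ i),
      sum_powersetCard_succ_insert_prod ev (notMem_erase i univ), erase_insert (notMem_erase i univ)]
    congr 1
    ring

theorem trace_newton (b : Module.Basis ι R M) (hb : ∀ i, A (b i) = ev i • b i)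
    (hP0 : P 0 = LinearMap.id)
    (hPrec : ∀ j, P (j + 1) =
      ((-1) ^ (j + 1) * ∑ t ∈ univ.powersetCard (j + 1), ∏ l ∈ t, ev l) • LinearMap.id + A ∘ₗ P j)
    (k : ℕ) :
    LinearMap.trace R M (P k) =
      (Fintype.card ι - k : ℕ) * ((-1) ^ k * ∑ t ∈ univ.powersetCard k, ∏ l ∈ t, ev l) := by
  rw [LinearMap.trace_eq_sum_of_apply_basis_eq_smul b
      fun i => newton_apply_of_apply_eq_smul hP0 hPrec (hb i) k,
    ← mul_sum, sum_sum_powersetCard_erase_prod, card_univ, nsmul_eq_mul, mul_left_comm]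

end Newton

-- Also for `j > n`, where `H j = 0` by division by zero and `Sⱼ` is an empty sum.
theorem choose_mul_eq_neg_one_pow_mul_sum_powersetCard_prod {n : ℕ} (ev : Fin n → ℝ) (H : ℕ → ℝ)
    (hH : ∀ j, H j = (-1) ^ j * (∑ s ∈ univ.powersetCard j, ∏ i ∈ s, ev i) / (n.choose j))
    (j : ℕ) :
    (n.choose j : ℝ) * H j = (-1) ^ j * ∑ s ∈ univ.powersetCard j, ∏ i ∈ s, ev i := by
  rcases le_or_gt j n with hj | hj
  · have hchoose : (n.choose j : ℝ) ≠ 0 := by exact_mod_cast (Nat.choose_pos hj).ne'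
    rw [hH, mul_div_cancel₀ _ hchoose]
  · rw [Nat.choose_eq_zero_of_lt hj, powersetCard_eq_empty.2 (by simpa using hj)]
    simp

theorem trace_newton_transformation_general
    {E : Type*} [NormedAddCommGroup E] [InnerProductSpace ℝ E]
    (n : ℕ)
    (A : E →ₗ[ℝ] E)
    -- the eigenvalues of A, realized by an orthonormal eigenbasis
    (ev : Fin n → ℝ) (b : OrthonormalBasis (Fin n) ℝ E)
    (hev : ∀ i, A (b i) = ev i • b i)
    -- the higher order mean curvatures: C(n,j)·Hⱼ = (-1)ʲ·Sⱼ
    (H : ℕ → ℝ)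
    (hH : ∀ j, H j = (-1) ^ j *
      (∑ s ∈ Finset.powersetCard j (Finset.univ : Finset (Fin n)), ∏ i ∈ s, ev i) /
      (n.choose j))
    -- the Newton transformations
    (P : ℕ → (E →ₗ[ℝ] E))
    (hP0 : P 0 = LinearMap.id)
    (hPrec : ∀ j : ℕ, P (j + 1) =
      ((n.choose (j + 1) : ℝ) * H (j + 1)) • LinearMap.id + A ∘ₗ P j) :
    ∀ k ≤ n, LinearMap.trace ℝ E (P k) = ((n - k) * n.choose k : ℕ) * H k := by
  have hCH := choose_mul_eq_neg_one_pow_mul_sum_powersetCard_prod ev H hH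
  simp_rw [hCH] at hPrec
  intro k _
  rw [trace_newton b.toBasis (by simpa using hev) hP0 hPrec, Fintype.card_fin, Nat.cast_mul,
    mul_assoc, hCH]

/-- Trace identity for Newton transformations: `Tr(Pₖ) = cₖ Hₖ` with
`cₖ = (n-k)·C(n,k)`, where `A` is a symmetric endomorphism of an `n`-dimensional
real inner product space with eigenvalues `k₁,…,kₙ`, `C(n,j)·Hⱼ = (-1)ʲ Sⱼ`
(`Sⱼ` the elementary symmetric functions of the eigenvalues), and
`P₀ = I`, `Pⱼ = C(n,j)Hⱼ·I + A∘Pⱼ₋₁`. -/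
theorem trace_newton_transformation
    {E : Type*} [NormedAddCommGroup E] [InnerProductSpace ℝ E] [FiniteDimensional ℝ E]
    (n : ℕ) (hdim : Module.finrank ℝ E = n)
    (A : E →ₗ[ℝ] E)
    (hA : ∀ x y : E, inner ℝ (A x) y = (inner ℝ x (A y) : ℝ))
    -- the eigenvalues of A, realized by an orthonormal eigenbasis
    (ev : Fin n → ℝ) (b : OrthonormalBasis (Fin n) ℝ E)
    (hev : ∀ i, A (b i) = ev i • b i)
    -- the higher order mean curvatures: C(n,j)·Hⱼ = (-1)ʲ·Sⱼ
    (H : ℕ → ℝ)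
    (hH : ∀ j, H j = (-1) ^ j *
      (∑ s ∈ Finset.powersetCard j (Finset.univ : Finset (Fin n)), ∏ i ∈ s, ev i) /
      (n.choose j))
    -- the Newton transformations
    (P : ℕ → (E →ₗ[ℝ] E))
    (hP0 : P 0 = LinearMap.id)
    (hPrec : ∀ j : ℕ, P (j + 1) =
      ((n.choose (j + 1) : ℝ) * H (j + 1)) • LinearMap.id + A ∘ₗ P j) :
    ∀ k ≤ n, LinearMap.trace ℝ E (P k) = ((n - k) * n.choose k : ℕ) * H k :=
  trace_newton_transformation_general n A ev b hev H hH P hP0 hPrec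
end
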